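/- Let rings A and B be symmetric separably equivalent with context (P, Q, ν, μ), and identify End(P_B) with the unital ring P ⊗_B Q under the μ-multiplication, so that A embeds by a ↦ Σⱼ a·pⱼ ⊗ qⱼ. Then this ring extension A ↪ P ⊗_B Q is: (i) Frobenius, with Frobenius homomorphism ν: P ⊗_B Q → A (an A-A-bimodule map) and dual bases tensor Σᵢ,ⱼ (pⱼ ⊗ q'ᵢ) ⊗_A (p'ᵢ ⊗ qⱼ), i.e. for every x ∈ P ⊗_B Q one has Σᵢ,ⱼ (pⱼ ⊗ q'ᵢ)·ν((p'ᵢ ⊗ qⱼ)·x) = x = Σᵢ,ⱼ ν(x·(pⱼ ⊗ q'ᵢ))·(p'ᵢ ⊗ qⱼ); (ii) split, i.e. there is an A-A-bimodule map P ⊗_B Q → A restricting to the identity on the image of A; and (iii) separable, i.e. the multiplication map (P ⊗_B Q) ⊗_A (P ⊗_B Q) → P ⊗_B Q splits as a map of (P ⊗_B Q)-(P ⊗_B Q)-bimodules. -/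

import Mathlib

/-! ### A balanced tensor product of a right module and a left module
over a possibly noncommutative ring, constructed as a quotient of the
`ℤ`-tensor product. -/

open MulOpposite
open scoped TensorProduct

section BalCore

variable (R : Type*) [Ring R] (M : Type*) [AddCommGroup M] [Module Rᵐᵒᵖ M]
  (N : Type*) [AddCommGroup N] [Module R N]

/-- The subgroup of relations defining the balanced tensor product. -/
def balRel : Submodule ℤ (TensorProduct ℤ M N) :=
  Submodule.span ℤ {x | ∃ (m : M) (r : R) (n : N), x = (op r • m) ⊗ₜ[ℤ] n - m ⊗ₜ[ℤ] (r • n)}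

/-- The balanced tensor product `M ⊗[R] N` of a right `R`-module `M` and a
left `R`-module `N`. -/
def Bal : Type _ := TensorProduct ℤ M N ⧸ balRel R M N

noncomputable instance : AddCommGroup (Bal R M N) := Submodule.Quotient.addCommGroup _

variable {M N}

/-- The canonical image of `m ⊗ n` in the balanced tensor product. -/
noncomputable def Bal.tmul (m : M) (n : N) : Bal R M N := Submodule.Quotient.mk (m ⊗ₜ[ℤ] n)

theorem Bal.add_tmul (m m' : M) (n : N) :
    Bal.tmul R (m + m') n = Bal.tmul R m n + Bal.tmul R m' n := by
  show Submodule.Quotient.mk _ = _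
  rw [TensorProduct.add_tmul]
  rfl

theorem Bal.tmul_add (m : M) (n n' : N) :
    Bal.tmul R m (n + n') = Bal.tmul R m n + Bal.tmul R m n' := by
  show Submodule.Quotient.mk _ = _
  rw [TensorProduct.tmul_add]
  rfl

theorem Bal.zero_tmul (n : N) : Bal.tmul R (0 : M) n = 0 := by
  show Submodule.Quotient.mk _ = _
  rw [TensorProduct.zero_tmul]
  rfl

theorem Bal.tmul_zero (m : M) : Bal.tmul R m (0 : N) = 0 := by
  show Submodule.Quotient.mk _ = _
  rw [TensorProduct.tmul_zero]
  rfl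

/-- The fundamental balancing relation `(m · r) ⊗ n = m ⊗ (r · n)`. -/
theorem Bal.op_smul_tmul (m : M) (r : R) (n : N) :
    Bal.tmul R (op r • m) n = Bal.tmul R m (r • n) :=
  (Submodule.Quotient.eq _).2 (Submodule.subset_span ⟨m, r, n, rfl⟩)

theorem Bal.induction_on {C : Bal R M N → Prop} (x : Bal R M N) (zero : C 0)
    (tmul : ∀ m n, C (Bal.tmul R m n)) (add : ∀ x y, C x → C y → C (x + y)) : C x := by
  obtain ⟨y, rfl⟩ := Submodule.Quotient.mk_surjective _ x
  induction y using TensorProduct.induction_on with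
  | zero => exact zero
  | tmul m n => exact tmul m n
  | add a b ha hb =>
      have : (Submodule.Quotient.mk (a + b) : Bal R M N)
          = Submodule.Quotient.mk a + Submodule.Quotient.mk b := rfl
      rw [this]; exact add _ _ ha hb

/-- Lift a balanced biadditive map to the balanced tensor product. -/
noncomputable def Bal.liftFun {T : Type*} [AddCommGroup T] (f : M → N → T)
    (h1 : ∀ m m' n, f (m + m') n = f m n + f m' n)
    (h2 : ∀ m n n', f m (n + n') = f m n + f m n')
    (h3 : ∀ (m : M) (r : R) (n : N), f (op r • m) n = f m (r • n)) : Bal R M N →+ T :=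
  letI f₂ : M →+ N →+ T :=
    AddMonoidHom.mk' (fun m => AddMonoidHom.mk' (f m) (h2 m))
      (fun m m' => AddMonoidHom.ext fun n => h1 m m' n)
  letI bil : M →ₗ[ℤ] N →ₗ[ℤ] T :=
    { toFun := fun m => (f₂ m).toIntLinearMap
      map_add' := fun m m' => LinearMap.ext fun n => by simp
      map_smul' := fun z m => LinearMap.ext fun n => by
        simp [map_zsmul] }
  ((balRel R M N).liftQ (TensorProduct.lift bil) (by
    rw [balRel, Submodule.span_le]
    rintro x ⟨m, r, n, rfl⟩
    simp only [SetLike.mem_coe, LinearMap.mem_ker, map_sub]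
    show TensorProduct.lift bil ((op r • m) ⊗ₜ[ℤ] n - m ⊗ₜ[ℤ] (r • n)) = 0
    rw [map_sub, TensorProduct.lift.tmul, TensorProduct.lift.tmul]
    show f (op r • m) n - f m (r • n) = 0
    rw [h3, sub_self])).toAddMonoidHom

@[simp] theorem Bal.liftFun_tmul {T : Type*} [AddCommGroup T] (f : M → N → T)
    (h1 : ∀ m m' n, f (m + m') n = f m n + f m' n)
    (h2 : ∀ m n n', f m (n + n') = f m n + f m n')
    (h3 : ∀ (m : M) (r : R) (n : N), f (op r • m) n = f m (r • n)) (m : M) (n : N) :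
    Bal.liftFun R f h1 h2 h3 (Bal.tmul R m n) = f m n := by
  simp [Bal.liftFun, Bal.tmul, Submodule.Quotient.mk]
  rfl

theorem Bal.addHom_ext {T : Type*} [AddCommGroup T] {f g : Bal R M N →+ T}
    (h : ∀ m n, f (Bal.tmul R m n) = g (Bal.tmul R m n)) : f = g := by
  ext x
  refine Bal.induction_on R (C := fun z => f z = g z) x (by simp) h
    (fun x y hx hy => by simp only [map_add]; rw [hx, hy])

end BalCore
section BalModule

variable (R : Type*) [Ring R] {M : Type*} [AddCommGroup M] [Module Rᵐᵒᵖ M]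
  {N : Type*} [AddCommGroup N] [Module R N]

section Left

variable {S : Type*} [Ring S] [Module S M] [SMulCommClass S Rᵐᵒᵖ M]

/-- The left action on the balanced tensor product through the first factor. -/
noncomputable def Bal.lsmulHom (s : S) : Bal R M N →+ Bal R M N :=
  Bal.liftFun R (fun m n => Bal.tmul R (s • m) n)
    (fun m m' n => by
      show Bal.tmul R (s • (m + m')) n = Bal.tmul R (s • m) n + Bal.tmul R (s • m') n
      rw [smul_add, Bal.add_tmul])
    (fun m n n' => Bal.tmul_add R _ n n')
    (fun m r n => by
      show Bal.tmul R (s • op r • m) n = Bal.tmul R (s • m) (r • n)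
      rw [smul_comm, Bal.op_smul_tmul])

theorem Bal.lsmulHom_tmul (s : S) (m : M) (n : N) :
    Bal.lsmulHom R (M := M) (N := N) s (Bal.tmul R m n) = Bal.tmul R (s • m) n :=
  Bal.liftFun_tmul R _ _ _ _ m n

noncomputable instance : SMul S (Bal R M N) := ⟨fun s x => Bal.lsmulHom R s x⟩

theorem Bal.lsmul_tmul (s : S) (m : M) (n : N) :
    s • Bal.tmul R m n = Bal.tmul R (s • m) n :=
  Bal.lsmulHom_tmul R s m n

theorem Bal.lsmul_one : Bal.lsmulHom R (M := M) (N := N) (1 : S) = AddMonoidHom.id _ :=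
  Bal.addHom_ext R fun m n => by
    rw [Bal.lsmulHom_tmul, one_smul, AddMonoidHom.id_apply]

theorem Bal.lsmul_mul (s t : S) :
    Bal.lsmulHom R (M := M) (N := N) (s * t) = (Bal.lsmulHom R s).comp (Bal.lsmulHom R t) :=
  Bal.addHom_ext R fun m n => by
    rw [AddMonoidHom.comp_apply, Bal.lsmulHom_tmul, Bal.lsmulHom_tmul, Bal.lsmulHom_tmul,
      mul_smul]

theorem Bal.lsmul_addsmul (s t : S) :
    Bal.lsmulHom R (M := M) (N := N) (s + t) = Bal.lsmulHom R s + Bal.lsmulHom R t :=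
  Bal.addHom_ext R fun m n => by
    rw [AddMonoidHom.add_apply, Bal.lsmulHom_tmul, Bal.lsmulHom_tmul, Bal.lsmulHom_tmul,
      add_smul, Bal.add_tmul]

theorem Bal.lsmul_zerosmul : Bal.lsmulHom R (M := M) (N := N) (0 : S) = 0 :=
  Bal.addHom_ext R fun m n => by
    rw [Bal.lsmulHom_tmul, zero_smul, Bal.zero_tmul, AddMonoidHom.zero_apply]

noncomputable instance : Module S (Bal R M N) where
  one_smul x := DFunLike.congr_fun (Bal.lsmul_one R (M := M) (N := N) (S := S)) x
  mul_smul s t x := DFunLike.congr_fun (Bal.lsmul_mul R s t) x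
  smul_zero s := (Bal.lsmulHom R (M := M) (N := N) s).map_zero
  smul_add s x y := (Bal.lsmulHom R s).map_add x y
  add_smul s t x := DFunLike.congr_fun (Bal.lsmul_addsmul R s t) x
  zero_smul x := DFunLike.congr_fun (Bal.lsmul_zerosmul R (M := M) (N := N) (S := S)) x

end Left

section Right

variable {S : Type*} [Ring S] [Module Sᵐᵒᵖ N] [SMulCommClass R Sᵐᵒᵖ N]

/-- The right action on the balanced tensor product through the second factor. -/
noncomputable def Bal.rsmulHom (s : Sᵐᵒᵖ) : Bal R M N →+ Bal R M N :=
  Bal.liftFun R (fun m n => Bal.tmul R m (s • n))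
    (fun m m' n => Bal.add_tmul R m m' _)
    (fun m n n' => by
      show Bal.tmul R m (s • (n + n')) = Bal.tmul R m (s • n) + Bal.tmul R m (s • n')
      rw [smul_add, Bal.tmul_add])
    (fun m r n => by
      show Bal.tmul R (op r • m) (s • n) = Bal.tmul R m (s • r • n)
      rw [Bal.op_smul_tmul, smul_comm])

theorem Bal.rsmulHom_tmul (s : Sᵐᵒᵖ) (m : M) (n : N) :
    Bal.rsmulHom R (M := M) (N := N) s (Bal.tmul R m n) = Bal.tmul R m (s • n) :=
  Bal.liftFun_tmul R _ _ _ _ m n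

noncomputable instance : SMul Sᵐᵒᵖ (Bal R M N) := ⟨fun s x => Bal.rsmulHom R s x⟩

theorem Bal.rsmul_tmul (s : Sᵐᵒᵖ) (m : M) (n : N) :
    s • Bal.tmul R m n = Bal.tmul R m (s • n) :=
  Bal.rsmulHom_tmul R s m n

theorem Bal.rsmul_one : Bal.rsmulHom R (M := M) (N := N) (1 : Sᵐᵒᵖ) = AddMonoidHom.id _ :=
  Bal.addHom_ext R fun m n => by
    rw [Bal.rsmulHom_tmul, one_smul, AddMonoidHom.id_apply]

theorem Bal.rsmul_mul (s t : Sᵐᵒᵖ) :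
    Bal.rsmulHom R (M := M) (N := N) (s * t) = (Bal.rsmulHom R s).comp (Bal.rsmulHom R t) :=
  Bal.addHom_ext R fun m n => by
    rw [AddMonoidHom.comp_apply, Bal.rsmulHom_tmul, Bal.rsmulHom_tmul, Bal.rsmulHom_tmul,
      mul_smul]

theorem Bal.rsmul_addsmul (s t : Sᵐᵒᵖ) :
    Bal.rsmulHom R (M := M) (N := N) (s + t) = Bal.rsmulHom R s + Bal.rsmulHom R t :=
  Bal.addHom_ext R fun m n => by
    rw [AddMonoidHom.add_apply, Bal.rsmulHom_tmul, Bal.rsmulHom_tmul, Bal.rsmulHom_tmul,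
      add_smul, Bal.tmul_add]

theorem Bal.rsmul_zerosmul : Bal.rsmulHom R (M := M) (N := N) (0 : Sᵐᵒᵖ) = 0 :=
  Bal.addHom_ext R fun m n => by
    rw [Bal.rsmulHom_tmul, zero_smul, Bal.tmul_zero, AddMonoidHom.zero_apply]

noncomputable instance : Module Sᵐᵒᵖ (Bal R M N) where
  one_smul x := DFunLike.congr_fun (Bal.rsmul_one R (M := M) (N := N) (S := S)) x
  mul_smul s t x := DFunLike.congr_fun (Bal.rsmul_mul R s t) x
  smul_zero s := (Bal.rsmulHom R (M := M) (N := N) s).map_zero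
  smul_add s x y := (Bal.rsmulHom R s).map_add x y
  add_smul s t x := DFunLike.congr_fun (Bal.rsmul_addsmul R s t) x
  zero_smul x := DFunLike.congr_fun (Bal.rsmul_zerosmul R (M := M) (N := N) (S := S)) x

end Right

end BalModule

/-! Under `P ⊗[B] Q ≅ End(P_B)` the element `Σⱼ pⱼ ⊗ qⱼ` is the identity, so the image of `a`
acts on either side as the scalar `a`. Hence `ν` is an `A`-bimodule map on the extension, and
its dual-basis identities are the adjunction identities of `ν` followed by those of `μ`.
The splittings come from the central elements `σ 1` and `τ 1` with `ν (σ 1) = 1` and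
`μ (τ 1) = 1`: the retraction is `x ↦ ν (x · σ 1)`, and the separability section is
`p ⊗ q ↦ p ⊗ τ 1 ⊗ q`. -/

namespace Bal

section Sums

variable (R : Type*) [Ring R] {M : Type*} [AddCommGroup M] [Module Rᵐᵒᵖ M]
  {N : Type*} [AddCommGroup N] [Module R N]

theorem sum_tmul {ι : Type*} (s : Finset ι) (f : ι → M) (n : N) :
    tmul R (∑ i ∈ s, f i) n = ∑ i ∈ s, tmul R (f i) n :=
  map_sum (AddMonoidHom.mk' (fun m => tmul R m n) fun m m' => add_tmul R m m' n) f s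

theorem tmul_sum {ι : Type*} (s : Finset ι) (m : M) (f : ι → N) :
    tmul R m (∑ i ∈ s, f i) = ∑ i ∈ s, tmul R m (f i) :=
  map_sum (AddMonoidHom.mk' (fun n => tmul R m n) fun n n' => tmul_add R m n n') f s

theorem addHom_ext₂ {T : Type*} [AddCommGroup T] {f g : Bal R M N →+ Bal R M N →+ T}
    (h : ∀ m n m' n', f (tmul R m n) (tmul R m' n') = g (tmul R m n) (tmul R m' n')) :
    f = g :=
  addHom_ext R fun m n => addHom_ext R fun m' n' => h m n m' n'

end Sums

section Map

variable {R : Type*} [Ring R] {M M' : Type*} [AddCommGroup M] [Module Rᵐᵒᵖ M]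
  [AddCommGroup M'] [Module Rᵐᵒᵖ M'] {N N' : Type*} [AddCommGroup N] [Module R N]
  [AddCommGroup N'] [Module R N'] {T : Type*} [AddCommGroup T]

noncomputable def lmap (F : T →+ M →+ M') (hF : ∀ t (r : R) m, F t (op r • m) = op r • F t m) :
    T →+ Bal R M N →+ Bal R M' N :=
  AddMonoidHom.mk'
    (fun t => liftFun R (fun m n => tmul R (F t m) n)
      (fun m m' n => by simp only [map_add, add_tmul])
      (fun m n n' => tmul_add R _ n n')
      (fun m r n => by simp only [hF, op_smul_tmul]))
    fun t t' => addHom_ext R fun m n => by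
      simp only [liftFun_tmul, AddMonoidHom.add_apply, map_add, add_tmul]

theorem lmap_tmul (F : T →+ M →+ M') (hF : ∀ t (r : R) m, F t (op r • m) = op r • F t m)
    (t : T) (m : M) (n : N) : lmap F hF t (tmul R m n) = tmul R (F t m) n := by
  simp only [lmap, AddMonoidHom.mk'_apply, liftFun_tmul]

noncomputable def rmap (G : T →+ N →+ N') (hG : ∀ t (r : R) n, G t (r • n) = r • G t n) :
    T →+ Bal R M N →+ Bal R M N' :=
  AddMonoidHom.mk'
    (fun t => liftFun R (fun m n => tmul R m (G t n))
      (fun m m' n => add_tmul R m m' _)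
      (fun m n n' => by simp only [map_add, tmul_add])
      (fun m r n => by simp only [hG, op_smul_tmul]))
    fun t t' => addHom_ext R fun m n => by
      simp only [liftFun_tmul, AddMonoidHom.add_apply, map_add, tmul_add]

theorem rmap_tmul (G : T →+ N →+ N') (hG : ∀ t (r : R) n, G t (r • n) = r • G t n)
    (t : T) (m : M) (n : N) : rmap G hG t (tmul R m n) = tmul R m (G t n) := by
  simp only [rmap, AddMonoidHom.mk'_apply, liftFun_tmul]

end Map

section Sandwich

variable {A B P Q : Type*} [Ring A] [Ring B]
  [AddCommGroup P] [Module A P] [Module Bᵐᵒᵖ P] [SMulCommClass A Bᵐᵒᵖ P]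
  [AddCommGroup Q] [Module B Q] [Module Aᵐᵒᵖ Q] [SMulCommClass B Aᵐᵒᵖ Q]

/-- `q̃ ⊗ p̃ ↦ (p ⊗ q̃) ⊗ (p̃ ⊗ q)`, i.e. `p ⊗ - ⊗ q` under
`(P ⊗[B] Q) ⊗[A] (P ⊗[B] Q) ≅ P ⊗[B] (Q ⊗[A] P) ⊗[B] Q`. -/
noncomputable def sandwich (p : P) (q : Q) : Bal A Q P →+ Bal A (Bal B P Q) (Bal B P Q) :=
  liftFun A (fun q' p' => tmul A (tmul B p q') (tmul B p' q))
    (fun q₁ q₂ p' => by simp only [tmul_add, add_tmul])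
    (fun q' p₁ p₂ => by simp only [add_tmul, tmul_add])
    (fun q' a p' => by simp only [← rsmul_tmul, op_smul_tmul, lsmul_tmul])

@[simp] theorem sandwich_tmul (p : P) (q q' : Q) (p' : P) :
    sandwich (B := B) p q (tmul A q' p') = tmul A (tmul B p q') (tmul B p' q) :=
  liftFun_tmul A _ _ _ _ q' p'

theorem sandwich_add_left (p₁ p₂ : P) (q : Q) :
    sandwich (A := A) (B := B) (p₁ + p₂) q = sandwich p₁ q + sandwich p₂ q :=
  addHom_ext A fun q' p' => by simp [add_tmul]

theorem sandwich_add_right (p : P) (q₁ q₂ : Q) :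
    sandwich (A := A) (B := B) p (q₁ + q₂) = sandwich p q₁ + sandwich p q₂ :=
  addHom_ext A fun q' p' => by simp [tmul_add]

theorem sandwich_op_smul_left (p : P) (b : B) (q : Q) :
    sandwich (A := A) (op b • p) q = (sandwich (B := B) p q).comp (lsmulHom A b) :=
  addHom_ext A fun q' p' => by
    simp only [sandwich_tmul, AddMonoidHom.comp_apply, lsmulHom_tmul, op_smul_tmul]

theorem sandwich_smul_right (p : P) (b : B) (q : Q) :
    sandwich (A := A) p (b • q) = (sandwich (B := B) p q).comp (rsmulHom A (op b)) :=
  addHom_ext A fun q' p' => by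
    simp only [sandwich_tmul, AddMonoidHom.comp_apply, rsmulHom_tmul, op_smul_tmul]

/-- `p ⊗ q ↦ p ⊗ c ⊗ q`. -/
noncomputable def sandwichAt (c : Bal A Q P) (hc : ∀ b : B, b • c = op b • c) :
    Bal B P Q →+ Bal A (Bal B P Q) (Bal B P Q) :=
  liftFun B (fun p q => sandwich p q c)
    (fun p₁ p₂ q => by simp only [sandwich_add_left, AddMonoidHom.add_apply])
    (fun p q₁ q₂ => by simp only [sandwich_add_right, AddMonoidHom.add_apply])
    (fun p b q => by
      simp only [sandwich_op_smul_left, sandwich_smul_right, AddMonoidHom.comp_apply]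
      exact congrArg _ (hc b))

theorem sandwichAt_tmul (c : Bal A Q P) (hc : ∀ b : B, b • c = op b • c) (p : P) (q : Q) :
    sandwichAt c hc (tmul B p q) = sandwich p q c :=
  liftFun_tmul B _ _ _ _ p q

end Sandwich

end Bal

section PairingMul

variable {A B P Q : Type*} [Ring A] [Ring B]
  [AddCommGroup P] [Module A P] [Module Bᵐᵒᵖ P] [AddCommGroup Q] [Module B Q] [Module Aᵐᵒᵖ Q]

/-- `mul` is the `μ`-multiplication of `P ⊗[B] Q`. -/
structure IsPairingMul (μ : Bal A Q P →+ B) (mul : Bal B P Q → Bal B P Q → Bal B P Q) :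
    Prop where
  add_mul : ∀ x y z, mul (x + y) z = mul x z + mul y z
  mul_add : ∀ x y z, mul x (y + z) = mul x y + mul x z
  tmul_mul_tmul : ∀ (p p' : P) (q q' : Q),
    mul (Bal.tmul B p q) (Bal.tmul B p' q') = Bal.tmul B (op (μ (Bal.tmul A q p')) • p) q'

namespace IsPairingMul

variable {μ : Bal A Q P →+ B} {mul : Bal B P Q → Bal B P Q → Bal B P Q}

noncomputable def toHom (h : IsPairingMul μ mul) : Bal B P Q →+ Bal B P Q →+ Bal B P Q :=
  AddMonoidHom.mk' (fun x => AddMonoidHom.mk' (mul x) (h.mul_add x))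
    fun x y => AddMonoidHom.ext (h.add_mul x y)

@[simp] theorem toHom_apply (h : IsPairingMul μ mul) (x y : Bal B P Q) :
    h.toHom x y = mul x y :=
  rfl

theorem zero_mul (h : IsPairingMul μ mul) (y : Bal B P Q) : mul 0 y = 0 := by
  rw [← toHom_apply h, map_zero, AddMonoidHom.zero_apply]

theorem mul_zero (h : IsPairingMul μ mul) (x : Bal B P Q) : mul x 0 = 0 := by
  rw [← toHom_apply h, map_zero]

theorem sum_mul (h : IsPairingMul μ mul) {ι : Type*} (s : Finset ι) (f : ι → Bal B P Q)
    (y : Bal B P Q) : mul (∑ i ∈ s, f i) y = ∑ i ∈ s, mul (f i) y := by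
  simp only [← toHom_apply h, map_sum, AddMonoidHom.finsetSum_apply]

theorem mul_sum (h : IsPairingMul μ mul) {ι : Type*} (s : Finset ι) (x : Bal B P Q)
    (f : ι → Bal B P Q) : mul x (∑ i ∈ s, f i) = ∑ i ∈ s, mul x (f i) := by
  simp only [← toHom_apply h, map_sum]

theorem smul_mul [SMulCommClass A Bᵐᵒᵖ P] (h : IsPairingMul μ mul) (a : A) (x y : Bal B P Q) :
    mul (a • x) y = a • mul x y := by
  have : h.toHom.comp (Bal.lsmulHom B a) = h.toHom.compr₂ (Bal.lsmulHom B a) :=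
    Bal.addHom_ext₂ B fun p q p' q' => by
      simp only [AddMonoidHom.comp_apply, AddMonoidHom.compr₂_apply, Bal.lsmulHom_tmul,
        toHom_apply, h.tmul_mul_tmul, smul_comm a]
  exact congr($this x y)

theorem mul_op_smul [SMulCommClass B Aᵐᵒᵖ Q] (h : IsPairingMul μ mul) (x : Bal B P Q) (a : A)
    (y : Bal B P Q) :
    mul x (op a • y) = op a • mul x y := by
  have : h.toHom.compl₂ (Bal.rsmulHom B (op a)) = h.toHom.compr₂ (Bal.rsmulHom B (op a)) :=
    Bal.addHom_ext₂ B fun p q p' q' => by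
      simp only [AddMonoidHom.compl₂_apply, AddMonoidHom.compr₂_apply, Bal.rsmulHom_tmul,
        toHom_apply, h.tmul_mul_tmul]
  exact congr($this x y)

theorem op_smul_mul [SMulCommClass A Bᵐᵒᵖ P] [SMulCommClass B Aᵐᵒᵖ Q]
    (h : IsPairingMul μ mul) (x : Bal B P Q) (a : A) (y : Bal B P Q) :
    mul (op a • x) y = mul x (a • y) := by
  have : h.toHom.comp (Bal.rsmulHom B (op a)) = h.toHom.compl₂ (Bal.lsmulHom B a) :=
    Bal.addHom_ext₂ B fun p q p' q' => by
      simp only [AddMonoidHom.comp_apply, AddMonoidHom.compl₂_apply, Bal.rsmulHom_tmul,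
        Bal.lsmulHom_tmul, toHom_apply, h.tmul_mul_tmul, Bal.op_smul_tmul]
  exact congr($this x y)

theorem sum_tmul_smul_mul [SMulCommClass A Bᵐᵒᵖ P] (h : IsPairingMul μ mul) {ι : Type*}
    [Fintype ι] {pj : ι → P} {qj : ι → Q}
    (hpq : ∀ p, ∑ j, op (μ (Bal.tmul A (qj j) p)) • pj j = p) (a : A) (x : Bal B P Q) :
    mul (∑ j, Bal.tmul B (a • pj j) (qj j)) x = a • x := by
  have : h.toHom (∑ j, Bal.tmul B (a • pj j) (qj j)) = Bal.lsmulHom B a :=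
    Bal.addHom_ext B fun p q => by
      simp only [toHom_apply, h.sum_mul, h.tmul_mul_tmul, ← Bal.sum_tmul, Bal.lsmulHom_tmul]
      conv_rhs => rw [← hpq p, Finset.smul_sum]
      simp only [smul_comm a]
  exact congr($this x)

theorem mul_sum_tmul_smul [SMulCommClass B Aᵐᵒᵖ Q] (h : IsPairingMul μ mul) {ι : Type*}
    [Fintype ι] {pj : ι → P} {qj : ι → Q} (hqp : ∀ q, ∑ j, μ (Bal.tmul A q (pj j)) • qj j = q)
    (a : A) (x : Bal B P Q) :
    mul x (∑ j, Bal.tmul B (a • pj j) (qj j)) = op a • x := by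
  have : h.toHom.flip (∑ j, Bal.tmul B (a • pj j) (qj j)) = Bal.rsmulHom B (op a) :=
    Bal.addHom_ext B fun p q => by
      simp only [AddMonoidHom.flip_apply, toHom_apply, h.mul_sum, h.tmul_mul_tmul,
        Bal.op_smul_tmul, ← Bal.tmul_sum, Bal.rsmulHom_tmul]
      conv_rhs => rw [← hqp (op a • q)]
      simp only [Bal.op_smul_tmul]
  exact congr($this x)

theorem sum_sum_op_smul_tmul [SMulCommClass B Aᵐᵒᵖ Q] (h : IsPairingMul μ mul)
    (ν : Bal B P Q →+ A) {ι κ : Type*} [Fintype ι] [Fintype κ] {p' : ι → P} {q' : ι → Q}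
    {pj : κ → P} {qj : κ → Q} (hq : ∀ q, ∑ i, op (ν (Bal.tmul B (p' i) q)) • q' i = q)
    (hp : ∀ p, ∑ j, op (μ (Bal.tmul A (qj j) p)) • pj j = p) (x : Bal B P Q) :
    ∑ i, ∑ j, op (ν (mul (Bal.tmul B (p' i) (qj j)) x)) • Bal.tmul B (pj j) (q' i) = x := by
  induction x using Bal.induction_on with
  | zero => simp only [h.mul_zero, map_zero, op_zero, zero_smul, Finset.sum_const_zero]
  | tmul p q =>
    calc _ = ∑ j, ∑ i, Bal.tmul B (pj j)
          (op (ν (Bal.tmul B (p' i) (μ (Bal.tmul A (qj j) p) • q))) • q' i) := by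
          rw [Finset.sum_comm]
          simp only [h.tmul_mul_tmul, Bal.op_smul_tmul, Bal.rsmul_tmul]
      _ = ∑ j, Bal.tmul B (op (μ (Bal.tmul A (qj j) p)) • pj j) q := by
          simp only [← Bal.tmul_sum, hq, Bal.op_smul_tmul]
      _ = Bal.tmul B p q := by rw [← Bal.sum_tmul, hp]
  | add u v hu hv =>
    simp only [h.mul_add, map_add, op_add, add_smul, Finset.sum_add_distrib, hu, hv]

theorem sum_sum_smul_tmul [SMulCommClass A Bᵐᵒᵖ P] (h : IsPairingMul μ mul)
    (ν : Bal B P Q →+ A) {ι κ : Type*} [Fintype ι] [Fintype κ] {p' : ι → P} {q' : ι → Q}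
    {pj : κ → P} {qj : κ → Q} (hp : ∀ p, ∑ i, ν (Bal.tmul B p (q' i)) • p' i = p)
    (hq : ∀ q, ∑ j, μ (Bal.tmul A q (pj j)) • qj j = q) (x : Bal B P Q) :
    ∑ i, ∑ j, ν (mul x (Bal.tmul B (pj j) (q' i))) • Bal.tmul B (p' i) (qj j) = x := by
  induction x using Bal.induction_on with
  | zero => simp only [h.zero_mul, map_zero, zero_smul, Finset.sum_const_zero]
  | tmul p q =>
    calc _ = ∑ j, Bal.tmul B
          (∑ i, ν (Bal.tmul B (op (μ (Bal.tmul A q (pj j))) • p) (q' i)) • p' i) (qj j) := by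
          rw [Finset.sum_comm]
          simp only [h.tmul_mul_tmul, Bal.lsmul_tmul, Bal.sum_tmul]
      _ = ∑ j, Bal.tmul B p (μ (Bal.tmul A q (pj j)) • qj j) := by
          simp_rw [hp, Bal.op_smul_tmul]
      _ = Bal.tmul B p q := by rw [← Bal.tmul_sum, hq]
  | add u v hu hv =>
    simp only [h.add_mul, map_add, add_smul, Finset.sum_add_distrib, hu, hv]

end IsPairingMul

end PairingMul

namespace IsPairingMul

section Separable

variable {A B P Q : Type*} [Ring A] [Ring B]
  [AddCommGroup P] [Module A P] [Module Bᵐᵒᵖ P] [SMulCommClass A Bᵐᵒᵖ P]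
  [AddCommGroup Q] [Module B Q] [Module Aᵐᵒᵖ Q] [SMulCommClass B Aᵐᵒᵖ Q]
  {μ : Bal A Q P →+ B} {mul : Bal B P Q → Bal B P Q → Bal B P Q}

noncomputable def mulLift (h : IsPairingMul μ mul) :
    Bal A (Bal B P Q) (Bal B P Q) →+ Bal B P Q :=
  Bal.liftFun A mul h.add_mul h.mul_add h.op_smul_mul

theorem mulLift_tmul (h : IsPairingMul μ mul) (x y : Bal B P Q) :
    h.mulLift (Bal.tmul A x y) = mul x y :=
  Bal.liftFun_tmul A _ _ _ _ x y

noncomputable def lmulTensor (h : IsPairingMul μ mul) :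
    Bal B P Q →+ Bal A (Bal B P Q) (Bal B P Q) →+ Bal A (Bal B P Q) (Bal B P Q) :=
  Bal.lmap h.toHom fun t a x => h.mul_op_smul t a x

theorem lmulTensor_tmul (h : IsPairingMul μ mul) (t x y : Bal B P Q) :
    h.lmulTensor t (Bal.tmul A x y) = Bal.tmul A (mul t x) y :=
  Bal.lmap_tmul _ _ t x y

noncomputable def rmulTensor (h : IsPairingMul μ mul) :
    Bal B P Q →+ Bal A (Bal B P Q) (Bal B P Q) →+ Bal A (Bal B P Q) (Bal B P Q) :=
  Bal.rmap h.toHom.flip fun t a y => h.smul_mul a y t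

theorem rmulTensor_tmul (h : IsPairingMul μ mul) (t x y : Bal B P Q) :
    h.rmulTensor t (Bal.tmul A x y) = Bal.tmul A x (mul y t) :=
  Bal.rmap_tmul _ _ t x y

theorem mulLift_sandwich (h : IsPairingMul μ mul) (p : P) (q : Q) (c : Bal A Q P) :
    h.mulLift (Bal.sandwich p q c) = Bal.tmul B (op (μ c) • p) q := by
  induction c using Bal.induction_on with
  | zero => simp only [map_zero, op_zero, zero_smul, Bal.zero_tmul]
  | tmul q' p' => rw [Bal.sandwich_tmul, mulLift_tmul, h.tmul_mul_tmul]
  | add u v hu hv => simp only [map_add, hu, hv, op_add, add_smul, Bal.add_tmul]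

theorem lmulTensor_comp_sandwich (h : IsPairingMul μ mul) (p p' : P) (q q' : Q) :
    (h.lmulTensor (Bal.tmul B p q)).comp (Bal.sandwich p' q')
      = Bal.sandwich (op (μ (Bal.tmul A q p')) • p) q' :=
  Bal.addHom_ext A fun q'' p'' => by
    rw [AddMonoidHom.comp_apply, Bal.sandwich_tmul, lmulTensor_tmul, h.tmul_mul_tmul,
      Bal.sandwich_tmul]

theorem rmulTensor_comp_sandwich (h : IsPairingMul μ mul) (p p' : P) (q q' : Q) :
    (h.rmulTensor (Bal.tmul B p' q')).comp (Bal.sandwich p q)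
      = (Bal.sandwich p q').comp (Bal.rsmulHom A (op (μ (Bal.tmul A q p')))) :=
  Bal.addHom_ext A fun q'' p'' => by
    rw [AddMonoidHom.comp_apply, AddMonoidHom.comp_apply, Bal.sandwich_tmul, rmulTensor_tmul,
      h.tmul_mul_tmul, Bal.rsmulHom_tmul, Bal.sandwich_tmul]

variable (c : Bal A Q P) (hc : ∀ b : B, b • c = op b • c)

theorem mulLift_sandwichAt (h : IsPairingMul μ mul) (hμc : μ c = 1) (t : Bal B P Q) :
    h.mulLift (Bal.sandwichAt c hc t) = t := by
  have : h.mulLift.comp (Bal.sandwichAt c hc) = AddMonoidHom.id _ :=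
    Bal.addHom_ext B fun p q => by
      rw [AddMonoidHom.comp_apply, Bal.sandwichAt_tmul, mulLift_sandwich, hμc, op_one,
        one_smul, AddMonoidHom.id_apply]
  exact congr($this t)

theorem sandwichAt_mul_eq_lmulTensor (h : IsPairingMul μ mul) (t t' : Bal B P Q) :
    Bal.sandwichAt c hc (mul t t') = h.lmulTensor t (Bal.sandwichAt c hc t') := by
  have : h.toHom.compr₂ (Bal.sandwichAt c hc) = h.lmulTensor.compl₂ (Bal.sandwichAt c hc) :=
    Bal.addHom_ext₂ B fun p q p' q' => by
      rw [AddMonoidHom.compr₂_apply, AddMonoidHom.compl₂_apply, toHom_apply, h.tmul_mul_tmul,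
        Bal.sandwichAt_tmul, Bal.sandwichAt_tmul, ← lmulTensor_comp_sandwich,
        AddMonoidHom.comp_apply]
  exact congr($this t t')

theorem sandwichAt_mul_eq_rmulTensor (h : IsPairingMul μ mul) (t t' : Bal B P Q) :
    Bal.sandwichAt c hc (mul t t') = h.rmulTensor t' (Bal.sandwichAt c hc t) := by
  have : h.toHom.compr₂ (Bal.sandwichAt c hc) =
      (h.rmulTensor.compl₂ (Bal.sandwichAt c hc)).flip :=
    Bal.addHom_ext₂ B fun p q p' q' => by
      rw [AddMonoidHom.compr₂_apply, AddMonoidHom.flip_apply, AddMonoidHom.compl₂_apply,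
        toHom_apply, h.tmul_mul_tmul, Bal.sandwichAt_tmul, Bal.sandwichAt_tmul,
        ← AddMonoidHom.comp_apply, rmulTensor_comp_sandwich, Bal.sandwich_op_smul_left]
      exact congrArg (Bal.sandwich p q') (hc _)
  exact congr($this t t')

end Separable

end IsPairingMul

theorem extension_is_split_separable_frobenius_general
    {A B P Q : Type*} [Ring A] [Ring B]
    [AddCommGroup P] [Module A P] [Module Bᵐᵒᵖ P] [SMulCommClass A Bᵐᵒᵖ P]
    [AddCommGroup Q] [Module B Q] [Module Aᵐᵒᵖ Q] [SMulCommClass B Aᵐᵒᵖ Q]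
    (ν : Bal B P Q →+ A)
    (hνl : ∀ (a : A) (x : Bal B P Q), ν (a • x) = a * ν x)
    (hνr : ∀ (a : A) (x : Bal B P Q), ν (op a • x) = ν x * a)
    (hνsplit : ∃ σ : A →+ Bal B P Q,
      (∀ (a c : A), σ (a * c) = a • σ c) ∧ (∀ (a c : A), σ (c * a) = op a • σ c) ∧
      ∀ a : A, ν (σ a) = a)
    (μ : Bal A Q P →+ B)
    (hμsplit : ∃ τ : B →+ Bal A Q P,
      (∀ (b c : B), τ (b * c) = b • τ c) ∧ (∀ (b c : B), τ (c * b) = op b • τ c) ∧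
      ∀ b : B, μ (τ b) = b)
    (n : ℕ) (q' : Fin n → Q) (p' : Fin n → P)
    (adj1 : ∀ p : P, ∑ i, ν (Bal.tmul B p (q' i)) • p' i = p)
    (adj2 : ∀ q : Q, ∑ i, op (ν (Bal.tmul B (p' i) q)) • q' i = q)
    (k : ℕ) (pj : Fin k → P) (qj : Fin k → Q)
    (adj3 : ∀ q : Q, ∑ j, μ (Bal.tmul A q (pj j)) • qj j = q)
    (adj4 : ∀ p : P, ∑ j, op (μ (Bal.tmul A (qj j) p)) • pj j = p)
    :
    ∀ mul : Bal B P Q → Bal B P Q → Bal B P Q,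
      (∀ x y z : Bal B P Q, mul (x + y) z = mul x z + mul y z) →
      (∀ x y z : Bal B P Q, mul x (y + z) = mul x y + mul x z) →
      (∀ (p p' : P) (q q'' : Q),
        mul (Bal.tmul B p q) (Bal.tmul B p' q'')
          = Bal.tmul B (op (μ (Bal.tmul A q p')) • p) q'') →
    ∀ emb : A → Bal B P Q,
      (∀ a : A, emb a = ∑ j, Bal.tmul B (a • pj j) (qj j)) →
      -- (i) Frobenius: `ν` is an `A`-`A`-bimodule map for the extension structure, with
      -- dual bases tensor `Σᵢⱼ (pⱼ ⊗ q'ᵢ) ⊗[A] (p'ᵢ ⊗ qⱼ)`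
      (((∀ (a : A) (x : Bal B P Q), ν (mul (emb a) x) = a * ν x) ∧
        (∀ (a : A) (x : Bal B P Q), ν (mul x (emb a)) = ν x * a) ∧
        (∀ x : Bal B P Q,
          (∑ i, ∑ j,
            mul (Bal.tmul B (pj j) (q' i)) (emb (ν (mul (Bal.tmul B (p' i) (qj j)) x)))) = x ∧
          (∑ i, ∑ j,
            mul (emb (ν (mul x (Bal.tmul B (pj j) (q' i))))) (Bal.tmul B (p' i) (qj j))) = x)) ∧
      -- (ii) split: an `A`-`A`-bimodule retraction of the embedding
      (∃ E : Bal B P Q →+ A,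
        (∀ (a : A) (x : Bal B P Q), E (mul (emb a) x) = a * E x) ∧
        (∀ (a : A) (x : Bal B P Q), E (mul x (emb a)) = E x * a) ∧
        ∀ a : A, E (emb a) = a) ∧
      -- (iii) separable: the multiplication map `(P ⊗[B] Q) ⊗[A] (P ⊗[B] Q) → P ⊗[B] Q`
      -- splits as a map of `(P ⊗[B] Q)`-`(P ⊗[B] Q)`-bimodules
      (∃ (mmul : Bal A (Bal B P Q) (Bal B P Q) →+ Bal B P Q)
         (L R : Bal B P Q → Bal A (Bal B P Q) (Bal B P Q) →+ Bal A (Bal B P Q) (Bal B P Q)),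
        (∀ x y : Bal B P Q, mmul (Bal.tmul A x y) = mul x y) ∧
        (∀ t x y : Bal B P Q, L t (Bal.tmul A x y) = Bal.tmul A (mul t x) y) ∧
        (∀ t x y : Bal B P Q, R t (Bal.tmul A x y) = Bal.tmul A x (mul y t)) ∧
        ∃ s : Bal B P Q →+ Bal A (Bal B P Q) (Bal B P Q),
          (∀ t : Bal B P Q, mmul (s t) = t) ∧
          (∀ t t' : Bal B P Q, s (mul t t') = L t (s t')) ∧
          (∀ t t' : Bal B P Q, s (mul t t') = R t' (s t)))) := by
  intro mul addl addr hmul emb hemb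
  have h : IsPairingMul μ mul := ⟨addl, addr, hmul⟩
  have emb_mul (a : A) (x : Bal B P Q) : mul (emb a) x = a • x := by
    rw [hemb]; exact h.sum_tmul_smul_mul adj4 a x
  have mul_emb (a : A) (x : Bal B P Q) : mul x (emb a) = op a • x := by
    rw [hemb]; exact h.mul_sum_tmul_smul adj3 a x
  obtain ⟨σ, hσl, hσr, hνσ⟩ := hνsplit
  obtain ⟨τ, hτl, hτr, hμτ⟩ := hμsplit
  have hσ (a : A) : a • σ 1 = op a • σ 1 := by rw [← hσl, ← hσr, mul_one, one_mul]
  have hτ (b : B) : b • τ 1 = op b • τ 1 := by rw [← hτl, ← hτr, mul_one, one_mul]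
  refine ⟨⟨fun a x => by rw [emb_mul, hνl], fun a x => by rw [mul_emb, hνr], fun x => ⟨?_, ?_⟩⟩,
    ⟨ν.comp (h.toHom.flip (σ 1)), fun a x => ?_, fun a x => ?_, fun a => ?_⟩,
    ⟨h.mulLift, h.lmulTensor, h.rmulTensor, h.mulLift_tmul, h.lmulTensor_tmul,
      h.rmulTensor_tmul, Bal.sandwichAt (τ 1) hτ, h.mulLift_sandwichAt _ hτ (hμτ 1),
      h.sandwichAt_mul_eq_lmulTensor _ hτ, h.sandwichAt_mul_eq_rmulTensor _ hτ⟩⟩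
  · simpa only [mul_emb] using h.sum_sum_op_smul_tmul ν adj2 adj4 x
  · simpa only [emb_mul] using h.sum_sum_smul_tmul ν adj1 adj3 x
  all_goals simp only [AddMonoidHom.comp_apply, AddMonoidHom.flip_apply, IsPairingMul.toHom_apply]
  · rw [emb_mul, h.smul_mul, hνl]
  · rw [mul_emb, h.op_smul_mul, hσ, h.mul_op_smul, hνr]
  · rw [emb_mul, hνl, hνσ, mul_one]

/-- For symmetric separably equivalent rings with context `(P,Q,ν,μ)`,
identifying `End(P_B)` with `P ⊗[B] Q` under the `μ`-multiplication, the ring extension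
`A ↪ P ⊗[B] Q`, `a ↦ Σⱼ a·pⱼ ⊗ qⱼ`, is (i) a Frobenius extension with Frobenius
homomorphism `ν` and dual bases tensor `Σᵢⱼ (pⱼ ⊗ q'ᵢ) ⊗[A] (p'ᵢ ⊗ qⱼ)`, (ii) split, and
(iii) separable. -/
theorem extension_is_split_separable_frobenius
    {A B P Q : Type*} [Ring A] [Ring B]
    [AddCommGroup P] [Module A P] [Module Bᵐᵒᵖ P] [SMulCommClass A Bᵐᵒᵖ P]
    [AddCommGroup Q] [Module B Q] [Module Aᵐᵒᵖ Q] [SMulCommClass B Aᵐᵒᵖ Q]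
    [Module.Finite A P] [Module.Projective A P]
    [Module.Finite Bᵐᵒᵖ P] [Module.Projective Bᵐᵒᵖ P]
    [Module.Finite B Q] [Module.Projective B Q]
    [Module.Finite Aᵐᵒᵖ Q] [Module.Projective Aᵐᵒᵖ Q]
    (ν : Bal B P Q →+ A)
    (hνl : ∀ (a : A) (x : Bal B P Q), ν (a • x) = a * ν x)
    (hνr : ∀ (a : A) (x : Bal B P Q), ν (op a • x) = ν x * a)
    (hνsurj : Function.Surjective ν)
    (hνsplit : ∃ σ : A →+ Bal B P Q,
      (∀ (a c : A), σ (a * c) = a • σ c) ∧ (∀ (a c : A), σ (c * a) = op a • σ c) ∧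
      ∀ a : A, ν (σ a) = a)
    (μ : Bal A Q P →+ B)
    (hμl : ∀ (b : B) (y : Bal A Q P), μ (b • y) = b * μ y)
    (hμr : ∀ (b : B) (y : Bal A Q P), μ (op b • y) = μ y * b)
    (hμsurj : Function.Surjective μ)
    (hμsplit : ∃ τ : B →+ Bal A Q P,
      (∀ (b c : B), τ (b * c) = b • τ c) ∧ (∀ (b c : B), τ (c * b) = op b • τ c) ∧
      ∀ b : B, μ (τ b) = b)
    (n : ℕ) (q' : Fin n → Q) (p' : Fin n → P)
    (adj1 : ∀ p : P, ∑ i, ν (Bal.tmul B p (q' i)) • p' i = p)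
    (adj2 : ∀ q : Q, ∑ i, op (ν (Bal.tmul B (p' i) q)) • q' i = q)
    (k : ℕ) (pj : Fin k → P) (qj : Fin k → Q)
    (adj3 : ∀ q : Q, ∑ j, μ (Bal.tmul A q (pj j)) • qj j = q)
    (adj4 : ∀ p : P, ∑ j, op (μ (Bal.tmul A (qj j) p)) • pj j = p)
    :
    ∀ mul : Bal B P Q → Bal B P Q → Bal B P Q,
      (∀ x y z : Bal B P Q, mul (x + y) z = mul x z + mul y z) →
      (∀ x y z : Bal B P Q, mul x (y + z) = mul x y + mul x z) →
      (∀ (p p' : P) (q q'' : Q),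
        mul (Bal.tmul B p q) (Bal.tmul B p' q'')
          = Bal.tmul B (op (μ (Bal.tmul A q p')) • p) q'') →
    ∀ emb : A → Bal B P Q,
      (∀ a : A, emb a = ∑ j, Bal.tmul B (a • pj j) (qj j)) →
      -- (i) Frobenius: `ν` is an `A`-`A`-bimodule map for the extension structure, with
      -- dual bases tensor `Σᵢⱼ (pⱼ ⊗ q'ᵢ) ⊗[A] (p'ᵢ ⊗ qⱼ)`
      (((∀ (a : A) (x : Bal B P Q), ν (mul (emb a) x) = a * ν x) ∧
        (∀ (a : A) (x : Bal B P Q), ν (mul x (emb a)) = ν x * a) ∧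
        (∀ x : Bal B P Q,
          (∑ i, ∑ j,
            mul (Bal.tmul B (pj j) (q' i)) (emb (ν (mul (Bal.tmul B (p' i) (qj j)) x)))) = x ∧
          (∑ i, ∑ j,
            mul (emb (ν (mul x (Bal.tmul B (pj j) (q' i))))) (Bal.tmul B (p' i) (qj j))) = x)) ∧
      -- (ii) split: an `A`-`A`-bimodule retraction of the embedding
      (∃ E : Bal B P Q →+ A,
        (∀ (a : A) (x : Bal B P Q), E (mul (emb a) x) = a * E x) ∧
        (∀ (a : A) (x : Bal B P Q), E (mul x (emb a)) = E x * a) ∧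
        ∀ a : A, E (emb a) = a) ∧
      -- (iii) separable: the multiplication map `(P ⊗[B] Q) ⊗[A] (P ⊗[B] Q) → P ⊗[B] Q`
      -- splits as a map of `(P ⊗[B] Q)`-`(P ⊗[B] Q)`-bimodules
      (∃ (mmul : Bal A (Bal B P Q) (Bal B P Q) →+ Bal B P Q)
         (L R : Bal B P Q → Bal A (Bal B P Q) (Bal B P Q) →+ Bal A (Bal B P Q) (Bal B P Q)),
        (∀ x y : Bal B P Q, mmul (Bal.tmul A x y) = mul x y) ∧
        (∀ t x y : Bal B P Q, L t (Bal.tmul A x y) = Bal.tmul A (mul t x) y) ∧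
        (∀ t x y : Bal B P Q, R t (Bal.tmul A x y) = Bal.tmul A x (mul y t)) ∧
        ∃ s : Bal B P Q →+ Bal A (Bal B P Q) (Bal B P Q),
          (∀ t : Bal B P Q, mmul (s t) = t) ∧
          (∀ t t' : Bal B P Q, s (mul t t') = L t (s t')) ∧
          (∀ t t' : Bal B P Q, s (mul t t') = R t' (s t)))) :=
  extension_is_split_separable_frobenius_general ν hνl hνr hνsplit μ hμsplit n q' p' adj1 adj2 k pj
    qj adj3 adj4
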